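/- For every q with 0 < q < 1, every x ∈ [0,1), every integer n ≥ 1 and every integer k with 0 ≤ k ≤ n: |b_{nk}(q;x) − b_{∞k}(q;x)| ≤ b_{nk}(q;x) · (x/(1−x)) · q^n/(1−q) + b_{∞k}(q;x) · q^{n−k+1}/(1−q). -/

import Mathlib

open Finset Filter

noncomputable section

/-- The q-integer `[n]_q = 1 + q + ⋯ + q^(n-1)`. -/
def qInt (q : ℝ) (n : ℕ) : ℝ := ∑ i ∈ Finset.range n, q ^ i

/-- The q-factorial `[n]_q!`. -/
def qFact (q : ℝ) : ℕ → ℝ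
  | 0 => 1
  | n + 1 => qFact q n * qInt q (n + 1)

/-- The q-binomial coefficient `[n k]_q`. -/
def qBinom (q : ℝ) (n k : ℕ) : ℝ := qFact q n / (qFact q k * qFact q (n - k))

/-- The Lupaş basis function `b_{nk}(q;x)`. -/
def lupasB (q : ℝ) (n k : ℕ) (x : ℝ) : ℝ :=
  qBinom q n k * q ^ (k * (k - 1) / 2) * x ^ k * (1 - x) ^ (n - k) /
    ∏ j ∈ Finset.range (n - 1), (1 - x + q ^ (j + 1) * x)

/-- The limit Lupaş basis function `b_{∞k}(q;x)` (for `0 < q < 1`, `x ∈ [0,1)`). -/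
def lupasBInf (q : ℝ) (k : ℕ) (x : ℝ) : ℝ :=
  q ^ (k * (k - 1) / 2) * (x / (1 - x)) ^ k /
    ((1 - q) ^ k * qFact q k * ∏' j : ℕ, (1 + q ^ j * (x / (1 - x))))

/-- The Lupaş q-analogue of the Bernstein operator `R_{n,q}(f,x)`. -/
def lupasR (q : ℝ) (n : ℕ) (f : ℝ → ℝ) (x : ℝ) : ℝ :=
  ∑ k ∈ Finset.range (n + 1), f (qInt q k / qInt q n) * lupasB q n k x

/-- The limit q-Lupaş operator `R_{∞,q}(f,x)` for `0 < q < 1`. -/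
def lupasRInfLow (q : ℝ) (f : ℝ → ℝ) (x : ℝ) : ℝ :=
  if x = 1 then f 1 else ∑' k : ℕ, f (1 - q ^ k) * lupasBInf q k x

/-- The limit q-Lupaş operator `R_{∞,q}(f,x)`: for `q > 1` it is defined by
reflection, `R_{∞,q}(f,x) = R_{∞,1/q}(g,1-x)` with `g(x) = f(1-x)`. -/
def lupasRInf (q : ℝ) (f : ℝ → ℝ) (x : ℝ) : ℝ :=
  if 1 < q then lupasRInfLow (1 / q) (fun t => f (1 - t)) (1 - x)
  else lupasRInfLow q f x

/-- The transform `v(q,x) = qx/(1-x+qx)`. -/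
def vq (q x : ℝ) : ℝ := q * x / (1 - x + q * x)

/-- `L_{n,q}(f,x) = R_{n,q}(f,x) - R_{∞,q}(f,x)`. -/
def lupasL (q : ℝ) (n : ℕ) (f : ℝ → ℝ) (x : ℝ) : ℝ :=
  lupasR q n f x - lupasRInf q f x

/-- The modulus of continuity `ω(f,t)` of `f` on `[0,1]`. -/
def omega1 (f : ℝ → ℝ) (t : ℝ) : ℝ :=
  sSup {d | ∃ x ∈ Set.Icc (0:ℝ) 1, ∃ y ∈ Set.Icc (0:ℝ) 1, |x - y| ≤ t ∧ d = |f x - f y|}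

/-- The second modulus of smoothness `ω₂(f,t)` of `f` on `[0,1]`. -/
def omega2 (f : ℝ → ℝ) (t : ℝ) : ℝ :=
  sSup {d | ∃ h, 0 ≤ h ∧ h ≤ t ∧ ∃ x, 0 ≤ x ∧ x ≤ 1 - 2 * h ∧
    d = |f (x + 2 * h) - 2 * f (x + h) + f x|}

/-!
With `t = x / (1 - x)` both basis functions are `q^(k(k-1)/2) t^k` over a product. Writing
`n = m + k`, one has `b_{nk} = b_{∞k} · A · B`, where `A = ∏_{j<k} (1 - q^(m+j+1))` equals
`[n k]_q (1-q)^k [k]_q!` and `B = ∏_{j≥0} (1 + q^(j+n) t)` is the tail of the infinite product.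
Then `b_{nk} - b_{∞k} = b_{∞k} A (B - 1) - b_{∞k} (1 - A)`, where `B - 1 ≤ B · q^n t / (1 - q)`
because `B ≤ exp (q^n t / (1 - q))`, and `1 - A ≤ ∑_{j<k} q^(m+j+1) ≤ q^(m+1) / (1 - q)` by the
Weierstrass product inequality.
-/

theorem Finset.one_sub_sum_le_prod_one_sub {ι : Type*} (s : Finset ι) {b : ι → ℝ}
    (hb0 : ∀ i ∈ s, 0 ≤ b i) (hb1 : ∀ i ∈ s, b i ≤ 1) :
    1 - ∑ i ∈ s, b i ≤ ∏ i ∈ s, (1 - b i) := by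
  classical
  induction s using Finset.induction_on with
  | empty => simp
  | insert i s hi ih =>
    rw [sum_insert hi, prod_insert hi]
    have hbi0 := hb0 i (mem_insert_self i s)
    have hP : ∏ j ∈ s, (1 - b j) ≤ 1 :=
      prod_le_one (fun j hj => sub_nonneg.2 (hb1 j (mem_insert_of_mem hj)))
        (fun j hj => sub_le_self 1 (hb0 j (mem_insert_of_mem hj)))
    have ih' := ih (fun j hj => hb0 j (mem_insert_of_mem hj))
      (fun j hj => hb1 j (mem_insert_of_mem hj))
    nlinarith

theorem Real.tprod_one_add_le_exp_tsum {ι : Type*} {a : ι → ℝ} (ha : ∀ i, 0 ≤ a i)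
    (hs : Summable a) : ∏' i, (1 + a i) ≤ Real.exp (∑' i, a i) :=
  le_of_tendsto' (Real.multipliable_one_add_of_summable hs).hasProd fun s =>
    (Real.prod_one_add_le_exp_sum s ha).trans
      (Real.exp_le_exp.2 (hs.sum_le_tsum s fun i _ => ha i))

theorem sub_one_le_mul_of_le_exp {B s : ℝ} (hB : 0 ≤ B) (hBs : B ≤ Real.exp s) :
    B - 1 ≤ B * s := by
  have hexp : B * Real.exp (-s) ≤ 1 := by
    calc B * Real.exp (-s) ≤ Real.exp s * Real.exp (-s) :=
          mul_le_mul_of_nonneg_right hBs (Real.exp_nonneg _)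
      _ = 1 := by rw [← Real.exp_add, add_neg_cancel, Real.exp_zero]
  nlinarith [Real.add_one_le_exp (-s)]

section GeometricProduct

variable {q : ℝ} (hq0 : 0 ≤ q) (hq1 : q < 1)
include hq0 hq1

theorem multipliable_one_add_geometric_mul (c : ℝ) :
    Multipliable fun j : ℕ => 1 + q ^ j * c :=
  Real.multipliable_one_add_of_summable ((summable_geometric_of_lt_one hq0 hq1).mul_right c)

theorem tprod_one_add_geometric_mul_eq (c : ℝ) (n : ℕ) :
    ∏' j : ℕ, (1 + q ^ j * c) =
      (∏ j ∈ range n, (1 + q ^ j * c)) * ∏' j : ℕ, (1 + q ^ j * (q ^ n * c)) := by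
  have hshift : Multipliable fun j : ℕ => 1 + q ^ (j + n) * c := by
    simpa only [pow_add, mul_assoc] using multipliable_one_add_geometric_mul hq0 hq1 (q ^ n * c)
  rw [← hshift.prod_mul_tprod_nat_mul' (f := fun j => 1 + q ^ j * c)]
  simp only [pow_add, mul_assoc]

theorem one_le_tprod_one_add_geometric_mul {c : ℝ} (hc : 0 ≤ c) :
    1 ≤ ∏' j : ℕ, (1 + q ^ j * c) :=
  ge_of_tendsto' (multipliable_one_add_geometric_mul hq0 hq1 c).hasProd fun _ =>
    one_le_prod fun j _ => le_add_of_nonneg_right (mul_nonneg (pow_nonneg hq0 j) hc)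

theorem tprod_one_add_geometric_mul_le_exp {c : ℝ} (hc : 0 ≤ c) :
    ∏' j : ℕ, (1 + q ^ j * c) ≤ Real.exp (c / (1 - q)) := by
  have hsum : ∑' j : ℕ, q ^ j * c = c / (1 - q) := by
    rw [tsum_mul_right, tsum_geometric_of_lt_one hq0 hq1, div_eq_inv_mul]
  rw [← hsum]
  exact Real.tprod_one_add_le_exp_tsum (fun j => mul_nonneg (pow_nonneg hq0 j) hc)
    ((summable_geometric_of_lt_one hq0 hq1).mul_right c)

theorem sum_range_pow_add_succ_le (m k : ℕ) :
    ∑ j ∈ range k, q ^ (m + j + 1) ≤ q ^ (m + 1) / (1 - q) := by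
  have hgeom : ∑ j ∈ range k, q ^ j ≤ (1 - q)⁻¹ := by
    rw [← tsum_geometric_of_lt_one hq0 hq1]
    exact (summable_geometric_of_lt_one hq0 hq1).sum_le_tsum _ fun j _ => pow_nonneg hq0 j
  calc ∑ j ∈ range k, q ^ (m + j + 1) = q ^ (m + 1) * ∑ j ∈ range k, q ^ j := by
        rw [mul_sum]
        exact sum_congr rfl fun j _ => by rw [← pow_add]; ring_nf
    _ ≤ q ^ (m + 1) * (1 - q)⁻¹ := mul_le_mul_of_nonneg_left hgeom (pow_nonneg hq0 _)
    _ = q ^ (m + 1) / (1 - q) := (div_eq_mul_inv _ _).symm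

end GeometricProduct

theorem one_sub_mul_qInt (q : ℝ) (m : ℕ) : (1 - q) * qInt q m = 1 - q ^ m := by
  rw [qInt, mul_comm, geom_sum_mul_neg]

theorem qInt_pos {q : ℝ} (hq : 0 ≤ q) {m : ℕ} (hm : 0 < m) : 0 < qInt q m :=
  sum_pos' (fun i _ => pow_nonneg hq i) ⟨0, mem_range.2 hm, by simp⟩

theorem qFact_pos {q : ℝ} (hq : 0 ≤ q) : ∀ m, 0 < qFact q m
  | 0 => one_pos
  | m + 1 => mul_pos (qFact_pos hq m) (qInt_pos hq m.succ_pos)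

theorem qFact_add (q : ℝ) (m : ℕ) :
    ∀ k, qFact q (m + k) = qFact q m * ∏ j ∈ range k, qInt q (m + j + 1)
  | 0 => by simp
  | k + 1 => by
    rw [← add_assoc, qFact, qFact_add q m k, prod_range_succ]
    ring

theorem qBinom_add_mul_qFact {q : ℝ} (hq : 0 ≤ q) (m k : ℕ) :
    qBinom q (m + k) k * ((1 - q) ^ k * qFact q k) = ∏ j ∈ range k, (1 - q ^ (m + j + 1)) := by
  have hk := (qFact_pos hq k).ne'
  have hm := (qFact_pos hq m).ne'
  simp only [← one_sub_mul_qInt, prod_mul_distrib, prod_const, card_range]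
  rw [qBinom, Nat.add_sub_cancel, qFact_add]
  field_simp

theorem prod_range_pred_one_sub_add (q x : ℝ) (n : ℕ) :
    ∏ j ∈ range (n - 1), (1 - x + q ^ (j + 1) * x) = ∏ j ∈ range n, (1 - x + q ^ j * x) := by
  cases n with
  | zero => rfl
  | succ n => simp [prod_range_succ']

theorem lupasB_eq_div_prod (q : ℝ) {x : ℝ} (hx : x < 1) {n k : ℕ} (hk : k ≤ n) :
    lupasB q n k x = qBinom q n k * q ^ (k * (k - 1) / 2) * (x / (1 - x)) ^ k /
      ∏ j ∈ range n, (1 + q ^ j * (x / (1 - x))) := by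
  have h1x : 1 - x ≠ 0 := (sub_pos.2 hx).ne'
  have hden : ∏ j ∈ range n, (1 - x + q ^ j * x) =
      (1 - x) ^ n * ∏ j ∈ range n, (1 + q ^ j * (x / (1 - x))) := by
    calc ∏ j ∈ range n, (1 - x + q ^ j * x)
        = ∏ j ∈ range n, ((1 - x) * (1 + q ^ j * (x / (1 - x)))) :=
          prod_congr rfl fun j _ => by field_simp
      _ = _ := by rw [prod_mul_distrib, prod_const, card_range]
  have hnum : x ^ k * (1 - x) ^ (n - k) = (x / (1 - x)) ^ k * (1 - x) ^ n := by
    rw [div_pow, ← Nat.sub_add_cancel hk, pow_add, Nat.add_sub_cancel]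
    field_simp
  rw [lupasB, prod_range_pred_one_sub_add, hden, mul_assoc _ (x ^ k), hnum]
  by_cases hP : ∏ j ∈ range n, (1 + q ^ j * (x / (1 - x))) = 0
  · simp [hP]
  · field_simp

theorem lupasBInf_nonneg {q : ℝ} (hq0 : 0 ≤ q) (hq1 : q < 1) {x : ℝ} (hx : x ∈ Set.Ico 0 1)
    (k : ℕ) : 0 ≤ lupasBInf q k x := by
  have ht : 0 ≤ x / (1 - x) := div_nonneg hx.1 (sub_nonneg.2 hx.2.le)
  have hP : 0 ≤ ∏' j : ℕ, (1 + q ^ j * (x / (1 - x))) :=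
    tprod_nonneg fun j => by positivity
  have := qFact_pos hq0 k
  have : 0 ≤ 1 - q := sub_nonneg.2 hq1.le
  unfold lupasBInf
  positivity

theorem lupasB_add_eq_lupasBInf_mul {q : ℝ} (hq0 : 0 ≤ q) (hq1 : q < 1) {x : ℝ}
    (hx : x ∈ Set.Ico 0 1) (m k : ℕ) :
    lupasB q (m + k) k x = lupasBInf q k x * (∏ j ∈ range k, (1 - q ^ (m + j + 1))) *
      ∏' j : ℕ, (1 + q ^ j * (q ^ (m + k) * (x / (1 - x)))) := by
  have ht : 0 ≤ x / (1 - x) := div_nonneg hx.1 (sub_nonneg.2 hx.2.le)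
  have hB : 0 < ∏' j : ℕ, (1 + q ^ j * (q ^ (m + k) * (x / (1 - x)))) :=
    one_pos.trans_le (one_le_tprod_one_add_geometric_mul hq0 hq1 (by positivity))
  have hq : (1 - q) ^ k ≠ 0 := pow_ne_zero k (sub_pos.2 hq1).ne'
  have hk := (qFact_pos hq0 k).ne'
  rw [lupasB_eq_div_prod q hx.2 (Nat.le_add_left k m), lupasBInf,
    tprod_one_add_geometric_mul_eq hq0 hq1 _ (m + k), ← qBinom_add_mul_qFact hq0 m k]
  generalize ∏' j : ℕ, (1 + q ^ j * (q ^ (m + k) * (x / (1 - x)))) = B at hB ⊢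
  generalize ∏ j ∈ range (m + k), (1 + q ^ j * (x / (1 - x))) = P
  rcases eq_or_ne P 0 with rfl | hP
  · simp
  · field_simp

theorem abs_mul_mul_sub_le {b A B r s : ℝ} (hb : 0 ≤ b) (hA0 : 0 ≤ A) (hA1 : A ≤ 1)
    (hB1 : 1 ≤ B) (hA : 1 - A ≤ r) (hB : B - 1 ≤ B * s) :
    |b * A * B - b| ≤ b * A * B * s + b * r := by
  have hbA : 0 ≤ b * A := mul_nonneg hb hA0
  have hs : 0 ≤ B * s := (sub_nonneg.2 hB1).trans hB
  have h1 : b * A * (B - 1) ≤ b * A * (B * s) := mul_le_mul_of_nonneg_left hB hbA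
  have h2 : b * (1 - A) ≤ b * r := mul_le_mul_of_nonneg_left hA hb
  have h3 : 0 ≤ b * (1 - A) := mul_nonneg hb (sub_nonneg.2 hA1)
  have h4 : 0 ≤ b * A * (B - 1) := mul_nonneg hbA (sub_nonneg.2 hB1)
  rw [abs_le]
  constructor <;> nlinarith

theorem lupasB_estimate_general (q : ℝ) (hq0 : 0 < q) (hq1 : q < 1) (x : ℝ)
    (hx : x ∈ Set.Ico (0:ℝ) 1) (n : ℕ) (k : ℕ) (hk : k ≤ n) :
    |lupasB q n k x - lupasBInf q k x| ≤
      lupasB q n k x * (x / (1 - x)) * q ^ n / (1 - q) +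
        lupasBInf q k x * q ^ (n - k + 1) / (1 - q) := by
  obtain ⟨m, rfl⟩ := Nat.exists_eq_add_of_le' hk
  have ht : 0 ≤ x / (1 - x) := div_nonneg hx.1 (sub_nonneg.2 hx.2.le)
  have hqn : 0 ≤ q ^ (m + k) * (x / (1 - x)) := by positivity
  have hpow : ∀ j, 0 ≤ q ^ (m + j + 1) ∧ q ^ (m + j + 1) ≤ 1 :=
    fun j => ⟨by positivity, pow_le_one₀ hq0.le hq1.le⟩
  have hA : 1 - ∏ j ∈ range k, (1 - q ^ (m + j + 1)) ≤ q ^ (m + 1) / (1 - q) :=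
    (sub_le_comm.1 (one_sub_sum_le_prod_one_sub _ (fun j _ => (hpow j).1)
      fun j _ => (hpow j).2)).trans (sum_range_pow_add_succ_le hq0.le hq1 m k)
  have hB1 : 1 ≤ ∏' j : ℕ, (1 + q ^ j * (q ^ (m + k) * (x / (1 - x)))) :=
    one_le_tprod_one_add_geometric_mul hq0.le hq1 hqn
  have hB := sub_one_le_mul_of_le_exp (zero_le_one.trans hB1)
    (tprod_one_add_geometric_mul_le_exp hq0.le hq1 hqn)
  rw [Nat.add_sub_cancel, lupasB_add_eq_lupasBInf_mul hq0.le hq1 hx]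
  refine (abs_mul_mul_sub_le (lupasBInf_nonneg hq0.le hq1 hx k)
    (prod_nonneg fun j _ => sub_nonneg.2 (hpow j).2)
    (prod_le_one (fun j _ => sub_nonneg.2 (hpow j).2) fun j _ => sub_le_self 1 (hpow j).1)
    hB1 hA hB).trans_eq ?_
  ring

theorem lupasB_estimate (q : ℝ) (hq0 : 0 < q) (hq1 : q < 1) (x : ℝ)
    (hx : x ∈ Set.Ico (0:ℝ) 1) (n : ℕ) (hn : 1 ≤ n) (k : ℕ) (hk : k ≤ n) :
    |lupasB q n k x - lupasBInf q k x| ≤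
      lupasB q n k x * (x / (1 - x)) * q ^ n / (1 - q) +
        lupasBInf q k x * q ^ (n - k + 1) / (1 - q) :=
  lupasB_estimate_general q hq0 hq1 x hx n k hk
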